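/- Let (X,d) be a uniformly convex geodesic space with a monotone modulus of uniform convexity of the form η(ε,r)=ε·η̃(ε,r), where η̃ is nondecreasing in ε. Then Φ(ε,b) = ε·η̃(ε/(b+ε), b+ε) is a modulus of uniform uniqueness for X. -/

import Mathlib

open Metric Set

/-- A geodesic joining `x` to `y`, parameterized on `[0, dist x y]`. -/
def IsGeodesic {X : Type*} [MetricSpace X] (x y : X) (γ : ℝ → X) : Prop :=
  γ 0 = x ∧ γ (dist x y) = y ∧
    ∀ s ∈ Set.Icc (0:ℝ) (dist x y), ∀ t ∈ Set.Icc (0:ℝ) (dist x y),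
      dist (γ s) (γ t) = |s - t|

/-- A geodesic space: every two points are joined by a geodesic. -/
def GeodesicSpace (X : Type*) [MetricSpace X] : Prop :=
  ∀ x y : X, ∃ γ : ℝ → X, IsGeodesic x y γ

/-- A uniquely geodesic space: every two points are joined by exactly one geodesic. -/
def UniquelyGeodesic (X : Type*) [MetricSpace X] : Prop :=
  ∀ x y : X, (∃ γ : ℝ → X, IsGeodesic x y γ) ∧
    ∀ γ₁ γ₂ : ℝ → X, IsGeodesic x y γ₁ → IsGeodesic x y γ₂ →
      Set.EqOn γ₁ γ₂ (Set.Icc 0 (dist x y))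

/-- `m` is a midpoint of `x` and `y`. -/
def IsMidpoint {X : Type*} [MetricSpace X] (m x y : X) : Prop :=
  dist m x = dist x y / 2 ∧ dist m y = dist x y / 2

/-- Strict convexity of a geodesic space. -/
def StrictlyConvexGS (X : Type*) [MetricSpace X] : Prop :=
  ∀ z x y m : X, x ≠ y → IsMidpoint m x y →
    dist z m < max (dist z x) (dist z y)

/-- Uniform convexity of a geodesic space. -/
def UniformlyConvexGS (X : Type*) [MetricSpace X] : Prop :=
  ∀ ε ∈ Set.Ioc (0:ℝ) 2, ∀ r > (0:ℝ), ∃ δ ∈ Set.Ioc (0:ℝ) 1,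
    ∀ z x y m : X, IsMidpoint m x y →
      dist z x ≤ r → dist z y ≤ r → ε * r ≤ dist x y →
        dist z m ≤ (1 - δ) * r

/-- `seg x y` is the geodesic segment with endpoints `x` and `y`
(the image of a geodesic joining `x` to `y`). -/
def IsSegSystem {X : Type*} [MetricSpace X] (seg : X → X → Set X) : Prop :=
  ∀ x y : X, ∃ γ : ℝ → X, IsGeodesic x y γ ∧
    seg x y = γ '' Set.Icc 0 (dist x y)

/-- `comb t x y` is the point `(1-t)x + ty` on the segment `seg x y`. -/
def IsCombSystem {X : Type*} [MetricSpace X] (seg : X → X → Set X)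
    (comb : ℝ → X → X → X) : Prop :=
  ∀ t ∈ Set.Icc (0:ℝ) 1, ∀ x y : X,
    comb t x y ∈ seg x y ∧ dist (comb t x y) x = t * dist x y ∧
      dist (comb t x y) y = (1 - t) * dist x y

/-- `Φ` is a modulus of uniform uniqueness for the segments `seg`. -/
def UniqModulus {X : Type*} [MetricSpace X] (seg : X → X → Set X)
    (Φ : ℝ → ℝ → ℝ) : Prop :=
  ∀ ε > (0:ℝ), ∀ b > (0:ℝ), ∀ x y z : X,
    ∀ r₁ ∈ Set.Ioc (0:ℝ) b, ∀ r₂ ∈ Set.Ioc (0:ℝ) b,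
      dist z x ≤ r₁ → dist z y ≤ r₂ + Φ ε b → r₁ + r₂ ≤ dist x y →
        Metric.infDist z (seg x y) < ε

/-- `Θ` is a modulus of uniform betweenness for the segments `seg`. -/
def BtwModulus {X : Type*} [MetricSpace X] (seg : X → X → Set X)
    (Θ : ℝ → ℝ → ℝ → ℝ) : Prop :=
  ∀ ε > (0:ℝ), ∀ a > (0:ℝ), ∀ b > (0:ℝ), ∀ x y z w : X,
    (∀ u ∈ ({x, y, z, w} : Set X), ∀ v ∈ ({x, y, z, w} : Set X), u ≠ v → a ≤ dist u v) →
    (∀ u ∈ ({x, y, z, w} : Set X), ∀ v ∈ ({x, y, z, w} : Set X), dist u v ≤ b) →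
    Metric.infDist y (seg x z) < Θ ε a b → Metric.infDist z (seg y w) < Θ ε a b →
      Metric.infDist y (seg x w) < ε ∧ Metric.infDist z (seg x w) < ε

/-!
Put `p` on `[x, y]` at distance `r₂` from `y`, so `r₁ ≤ d(x, p) ≤ r₁ + Φ`. If `d(z, p) ≥ ε`, the
midpoint `m` of `z` and `p` is pushed inwards by `Φ` both by uniform convexity around `x`
(radius `d(x, p)`) and around `y` (radius `r₂ + Φ`); both radii are at most `b + ε`, so the
monotonicity of the modulus bounds both gains below by `Φ`. Then
`d(x, y) ≤ d(x, m) + d(m, y) ≤ d(x, y) - Φ`, which is absurd.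
-/

def IsUniformConvexityModulus (X : Type*) [MetricSpace X] (η : ℝ → ℝ → ℝ) : Prop :=
  ∀ ε ∈ Set.Ioc (0:ℝ) 2, ∀ r > (0:ℝ), ∀ z x y m : X, IsMidpoint m x y →
    dist z x ≤ r → dist z y ≤ r → ε * r ≤ dist x y → dist z m ≤ (1 - η ε r) * r

namespace IsGeodesic

variable {X : Type*} [MetricSpace X] {x y : X} {γ : ℝ → X} {s : ℝ}

theorem dist_left_apply (hγ : IsGeodesic x y γ) (hs : s ∈ Icc 0 (dist x y)) :
    dist x (γ s) = s := by
  rw [← hγ.1, hγ.2.2 0 ⟨le_rfl, hs.1.trans hs.2⟩ s hs, zero_sub, abs_neg, abs_of_nonneg hs.1]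

theorem dist_apply_right (hγ : IsGeodesic x y γ) (hs : s ∈ Icc 0 (dist x y)) :
    dist (γ s) y = dist x y - s := by
  conv_lhs => rw [← hγ.2.1]
  rw [hγ.2.2 s hs _ ⟨hs.1.trans hs.2, le_rfl⟩, abs_sub_comm, abs_of_nonneg (sub_nonneg.2 hs.2)]

end IsGeodesic

theorem GeodesicSpace.exists_isMidpoint {X : Type*} [MetricSpace X] (hgeo : GeodesicSpace X)
    (x y : X) : ∃ m, IsMidpoint m x y := by
  obtain ⟨γ, hγ⟩ := hgeo x y
  have hs : dist x y / 2 ∈ Icc 0 (dist x y) :=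
    ⟨by positivity, by linarith [dist_nonneg (x := x) (y := y)]⟩
  refine ⟨γ (dist x y / 2), ?_, ?_⟩
  · rw [dist_comm, hγ.dist_left_apply hs]
  · rw [hγ.dist_apply_right hs]
    ring

theorem IsSegSystem.exists_mem_dist_eq {X : Type*} [MetricSpace X] {seg : X → X → Set X}
    (hseg : IsSegSystem seg) (x y : X) {s : ℝ} (hs : s ∈ Icc 0 (dist x y)) :
    ∃ p ∈ seg x y, dist x p = s ∧ dist p y = dist x y - s := by
  obtain ⟨γ, hγ, hxy⟩ := hseg x y
  exact ⟨γ s, hxy ▸ mem_image_of_mem γ hs, hγ.dist_left_apply hs, hγ.dist_apply_right hs⟩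

section ConvexityModulus

variable {X : Type*} [MetricSpace X] {ηt : ℝ → ℝ → ℝ}

theorem mem_Ioc_zero_half_of_modulus
    (hη : ∀ ε ∈ Set.Ioc (0:ℝ) 2, ∀ r > (0:ℝ), ε * ηt ε r ∈ Set.Ioc (0:ℝ) 1)
    (hηtmono : ∀ ε ε' : ℝ, 0 < ε → ε ≤ ε' → ε' ≤ 2 → ∀ r > (0:ℝ), ηt ε r ≤ ηt ε' r)
    {ε r : ℝ} (hε : ε ∈ Set.Ioc (0:ℝ) 2) (hr : 0 < r) : ηt ε r ∈ Set.Ioc (0:ℝ) (1 / 2) := by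
  refine ⟨pos_of_mul_pos_right (hη ε hε r hr).1 hε.1.le, ?_⟩
  have htwo := (hη 2 ⟨two_pos, le_rfl⟩ r hr).2
  linarith [hηtmono ε 2 hε.1 hε.2 le_rfl r hr]

theorem dist_isMidpoint_le_sub (hη : IsUniformConvexityModulus X fun ε r => ε * ηt ε r)
    (hmono : ∀ ε ∈ Set.Ioc (0:ℝ) 2, ∀ r r' : ℝ, 0 < r → r ≤ r' →
      ε * ηt ε r' ≤ ε * ηt ε r)
    (hηtmono : ∀ ε ε' : ℝ, 0 < ε → ε ≤ ε' → ε' ≤ 2 → ∀ r > (0:ℝ), ηt ε r ≤ ηt ε' r)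
    {z x y m : X} {ε r B : ℝ} (hε : 0 < ε) (hr : 0 < r) (hrB : r ≤ B) (hm : IsMidpoint m x y)
    (hzx : dist z x ≤ r) (hzy : dist z y ≤ r) (hxy : ε ≤ dist x y) :
    dist z m ≤ r - ε * ηt (ε / B) B := by
  have he : ε / r ≤ 2 := by
    rw [div_le_iff₀ hr]
    linarith [dist_triangle_left x y z]
  have he₀ : 0 < ε / B := div_pos hε (hr.trans_le hrB)
  have he₀e : ε / B ≤ ε / r := div_le_div_of_nonneg_left hε.le hr hrB
  have hηt : ηt (ε / B) B ≤ ηt (ε / r) r :=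
    (le_of_mul_le_mul_left (hmono _ ⟨he₀, he₀e.trans he⟩ r B hr hrB) he₀).trans
      (hηtmono _ _ he₀ he₀e he r hr)
  calc dist z m ≤ (1 - ε / r * ηt (ε / r) r) * r :=
        hη _ ⟨div_pos hε hr, he⟩ r hr z x y m hm hzx hzy (by rwa [div_mul_cancel₀ _ hr.ne'])
    _ = r - ε * ηt (ε / r) r := by field_simp
    _ ≤ r - ε * ηt (ε / B) B := by gcongr

end ConvexityModulus

/-- If a uniformly convex geodesic space has a monotone modulus of uniform convexity of the
form `η ε r = ε * η̃ ε r` with `η̃` nondecreasing in `ε`, then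
`Φ(ε,b) = ε * η̃ (ε/(b+ε)) (b+ε)` is a modulus of uniform uniqueness. -/
theorem uniformlyConvex_uniformlyUniquelyGeodesic' {X : Type*} [MetricSpace X]
    (hgeo : GeodesicSpace X) (ηt : ℝ → ℝ → ℝ)
    (hη : ∀ ε ∈ Set.Ioc (0:ℝ) 2, ∀ r > (0:ℝ), ε * ηt ε r ∈ Set.Ioc (0:ℝ) 1 ∧
      ∀ z x y m : X, IsMidpoint m x y →
        dist z x ≤ r → dist z y ≤ r → ε * r ≤ dist x y →
          dist z m ≤ (1 - ε * ηt ε r) * r)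
    (hmono : ∀ ε ∈ Set.Ioc (0:ℝ) 2, ∀ r r' : ℝ, 0 < r → r ≤ r' →
      ε * ηt ε r' ≤ ε * ηt ε r)
    (hηtmono : ∀ ε ε' : ℝ, 0 < ε → ε ≤ ε' → ε' ≤ 2 → ∀ r > (0:ℝ), ηt ε r ≤ ηt ε' r)
    (seg : X → X → Set X) (hseg : IsSegSystem seg) :
    UniqModulus seg (fun ε b => ε * ηt (ε / (b + ε)) (b + ε)) := by
  intro ε hε b hb x y z r₁ ⟨hr₁, hr₁b⟩ r₂ ⟨hr₂, hr₂b⟩ hzx hzy hxy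
  beta_reduce at hzy
  set B := b + ε
  set Φ := ε * ηt (ε / B) B
  have hB : 0 < B := add_pos hb hε
  have hηt := mem_Ioc_zero_half_of_modulus (fun ε hε r hr => (hη ε hε r hr).1) hηtmono
    (ε := ε / B) ⟨by positivity, by rw [div_le_iff₀ hB]; linarith⟩ hB
  have hΦ : 0 < Φ := mul_pos hε hηt.1
  have hΦε : Φ ≤ ε := by nlinarith [hηt.2]
  have hxy_le : dist x y ≤ r₁ + r₂ + Φ := by linarith [dist_triangle_left x y z]
  obtain ⟨p, hp, hxp, hpy⟩ :=
    hseg.exists_mem_dist_eq x y (s := dist x y - r₂) ⟨by linarith, by linarith⟩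
  refine (infDist_le_dist_of_mem hp).trans_lt (lt_of_not_ge fun hzp => ?_)
  obtain ⟨m, hm⟩ := hgeo.exists_isMidpoint z p
  have hconv : IsUniformConvexityModulus X fun ε r => ε * ηt ε r :=
    fun ε hε r hr => (hη ε hε r hr).2
  have hxm := dist_isMidpoint_le_sub hconv hmono hηtmono (B := B) hε (by linarith) (by linarith)
    hm (by rw [dist_comm]; linarith) hxp.le hzp
  have hym := dist_isMidpoint_le_sub hconv hmono hηtmono (r := r₂ + Φ) (B := B) hε
    (by linarith) (by linarith) hm (by rwa [dist_comm]) (by rw [dist_comm]; linarith) hzp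
  linarith [dist_triangle_right x y m]
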